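/- arXiv:2401.07975 — 2 statements merged into one kernel-verified Lean document; each statement's English description precedes it below -/
import Mathlib

section
/- Let 𝒞 ⊆ ℝⁿ × ℝⁿ be a closed set whose fiber C_x = {ξ : (x,ξ) ∈ 𝒞} over each x ∈ ℝⁿ is a convex cone, let A ∈ ℝⁿ be fixed, and let τ : ℝⁿ → (ℝⁿ)* be a continuous family of linear functionals satisfying τ_x(ξ) ≥ ‖ξ‖/(1 + ‖x − A‖) for all x ∈ ℝⁿ and ξ ∈ C_x. Define U_x = {ξ ∈ C_x : τ_x(ξ) = 1}. Then the set-valued map x ↦ U_x is upper semicontinuous in the sense of Filippov: for every x ∈ ℝⁿ and every ε > 0 there exists δ > 0 such that for every y with ‖y − x‖ < δ one has U_y ⊆ {ξ ∈ ℝⁿ : there exists η ∈ U_x with ‖ξ − η‖ < ε}. -/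
/-- Upper semicontinuity (in the sense of Filippov) of the set-valued map
`x ↦ U_x = {ξ ∈ C_x | τ_x ξ = 1}`, where the fibers `C_x` of the closed set
`𝒞` are convex cones and the continuous family of linear functionals `τ`
satisfies the growth estimate `τ_x ξ ≥ ‖ξ‖ / (1 + ‖x - A‖)` on the cones. -/
theorem velocity_sets_upper_semicontinuous
    (n : ℕ)
    (𝒞 : Set (EuclideanSpace ℝ (Fin n) × EuclideanSpace ℝ (Fin n)))
    (h𝒞_closed : IsClosed 𝒞)
    (h𝒞_convex : ∀ x : EuclideanSpace ℝ (Fin n), Convex ℝ {ξ | (x, ξ) ∈ 𝒞})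
    (h𝒞_zero : ∀ x : EuclideanSpace ℝ (Fin n), (x, (0 : EuclideanSpace ℝ (Fin n))) ∈ 𝒞)
    (h𝒞_cone : ∀ (x : EuclideanSpace ℝ (Fin n)) (l : ℝ) ξ, 0 ≤ l → (x, ξ) ∈ 𝒞 → (x, l • ξ) ∈ 𝒞)
    (A : EuclideanSpace ℝ (Fin n))
    (τ : EuclideanSpace ℝ (Fin n) → (EuclideanSpace ℝ (Fin n) →L[ℝ] ℝ))
    (hτ_cont : Continuous τ)
    (hτ : ∀ x ξ, (x, ξ) ∈ 𝒞 → ‖ξ‖ / (1 + ‖x - A‖) ≤ τ x ξ) :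
    ∀ x : EuclideanSpace ℝ (Fin n), ∀ ε > (0 : ℝ), ∃ δ > (0 : ℝ),
      ∀ y : EuclideanSpace ℝ (Fin n), ‖y - x‖ < δ →
        ∀ ξ, (y, ξ) ∈ 𝒞 → τ y ξ = 1 →
          ∃ η, ((x, η) ∈ 𝒞 ∧ τ x η = 1) ∧ ‖ξ - η‖ < ε := by
  intro x ε hε
  by_contra hcon
  push_neg at hcon
  have key : ∀ k : ℕ, ∃ y : EuclideanSpace ℝ (Fin n), ‖y - x‖ < 1/(k+1) ∧
      ∃ ξ, (y, ξ) ∈ 𝒞 ∧ τ y ξ = 1 ∧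
        ∀ η, ((x, η) ∈ 𝒞 ∧ τ x η = 1) → ε ≤ ‖ξ - η‖ := by
    intro k
    obtain ⟨y, hy, ξ, h1, h2, h3⟩ := hcon (1/(k+1)) (by positivity)
    exact ⟨y, hy, ξ, h1, h2, h3⟩
  choose y hy ξ hξC hξτ hξfar using key
  -- y k → x
  have hyx : Filter.Tendsto y Filter.atTop (nhds x) := by
    rw [tendsto_iff_norm_sub_tendsto_zero]
    apply squeeze_zero (fun k => norm_nonneg _) (fun k => (hy k).le)
    exact tendsto_one_div_add_atTop_nhds_zero_nat
  -- bound on ξ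
  set R : ℝ := 2 + ‖x - A‖ with hR
  have hbound : ∀ k, ξ k ∈ Metric.closedBall (0 : EuclideanSpace ℝ (Fin n)) R := by
    intro k
    have hpos : (0:ℝ) < 1 + ‖y k - A‖ := by positivity
    have h1 : ‖ξ k‖ / (1 + ‖y k - A‖) ≤ 1 := (hτ _ _ (hξC k)).trans_eq (hξτ k)
    have h2 : ‖ξ k‖ ≤ 1 + ‖y k - A‖ := by
      rw [div_le_one hpos] at h1; exact h1
    have h3 : ‖y k - A‖ ≤ ‖y k - x‖ + ‖x - A‖ := norm_sub_le_norm_sub_add_norm_sub _ _ _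
    have h4 : ‖y k - x‖ ≤ 1 := by
      have := (hy k).le
      have : ‖y k - x‖ ≤ 1/(k+1) := this
      calc ‖y k - x‖ ≤ 1/(k+1) := this
        _ ≤ 1 := by
          rw [div_le_one (by positivity)]
          linarith [Nat.cast_nonneg (α := ℝ) k]
    simp only [Metric.mem_closedBall, dist_zero_right]
    calc ‖ξ k‖ ≤ 1 + ‖y k - A‖ := h2
      _ ≤ 1 + (‖y k - x‖ + ‖x - A‖) := by linarith
      _ ≤ R := by rw [hR]; linarith
  obtain ⟨b, -, φ, hφ, hbφ⟩ := tendsto_subseq_of_bounded Metric.isBounded_closedBall hbound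
  have hyφ : Filter.Tendsto (y ∘ φ) Filter.atTop (nhds x) :=
    hyx.comp hφ.tendsto_atTop
  have hpair : Filter.Tendsto (fun k => (y (φ k), ξ (φ k))) Filter.atTop (nhds (x, b)) :=
    hyφ.prodMk_nhds hbφ
  have hmem : (x, b) ∈ 𝒞 :=
    h𝒞_closed.mem_of_tendsto hpair (Filter.Eventually.of_forall fun k => hξC (φ k))
  have hτb : τ x b = 1 := by
    have hcont : Continuous fun p : EuclideanSpace ℝ (Fin n) × EuclideanSpace ℝ (Fin n) =>
        τ p.1 p.2 := (hτ_cont.comp continuous_fst).clm_apply continuous_snd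
    have := (hcont.tendsto (x, b)).comp hpair
    have heq : (fun k => τ (y (φ k)) (ξ (φ k))) = fun _ => (1:ℝ) := funext fun k => hξτ (φ k)
    rw [show ((fun p : EuclideanSpace ℝ (Fin n) × EuclideanSpace ℝ (Fin n) => τ p.1 p.2) ∘
        fun k => (y (φ k), ξ (φ k))) = fun k => τ (y (φ k)) (ξ (φ k)) from rfl, heq] at this
    exact (tendsto_const_nhds_iff.mp this).symm
  have hdist : Filter.Tendsto (fun k => ‖ξ (φ k) - b‖) Filter.atTop (nhds 0) := by
    rw [← tendsto_iff_norm_sub_tendsto_zero]; exact hbφ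
  obtain ⟨k, hk⟩ := (hdist.eventually (gt_mem_nhds hε)).exists
  exact absurd hk (not_lt.mpr (hξfar (φ k) b ⟨hmem, hτb⟩))
end

section
/- Let n ≥ 1 and fix A ∈ ℝⁿ. Suppose each x ∈ ℝⁿ is assigned a convex cone C_x ⊆ ℝⁿ, and suppose T : ℝⁿ → ℝ is continuously differentiable with dT_x(ξ) ≥ ‖ξ‖/(1 + ‖x − A‖) for every x ∈ ℝⁿ and every ξ ∈ C_x. Then every admissible Lipschitz loop is constant: if x : [0,1] → ℝⁿ is Lipschitz with ẋ(t) ∈ C_{x(t)} for almost every t and x(0) = x(1), then x(t) = x(0) for all t ∈ [0,1]. -/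
/-!
Along an admissible Lipschitz loop `x`, the function `T ∘ x` is Lipschitz, hence absolutely
continuous, and by the chain rule its derivative `dT_{x(t)}(ẋ(t))` dominates
`‖ẋ(t)‖ / (1 + ‖x(t) - A‖) ≥ 0` almost everywhere. Its integral over `[0, 1]` is
`T (x 1) - T (x 0) = 0`, so this derivative vanishes almost everywhere; hence `ẋ = 0` almost
everywhere, and an absolutely continuous path with almost everywhere vanishing derivative is
constant.
-/

open MeasureTheory Set NNReal

theorem AbsolutelyContinuousOnInterval.ae_deriv_eq_zero_of_nonneg {g : ℝ → ℝ} {a b : ℝ}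
    (hab : a ≤ b) (hg : AbsolutelyContinuousOnInterval g a b) (hgab : g a = g b)
    (hg' : 0 ≤ᵐ[volume.restrict (Icc a b)] deriv g) :
    deriv g =ᵐ[volume.restrict (Icc a b)] 0 := by
  rw [← Measure.restrict_congr_set Ioc_ae_eq_Icc] at hg' ⊢
  refine (intervalIntegral.integral_eq_zero_iff_of_le_of_nonneg_ae hab hg'
    hg.intervalIntegrable_deriv).1 ?_
  rw [hg.integral_deriv_eq_sub, hgab, sub_self]

theorem LocallyLipschitz.exists_lipschitzOnWith_comp {α E F : Type*} [PseudoEMetricSpace α]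
    [PseudoMetricSpace E] [PseudoMetricSpace F] {T : E → F} (hT : LocallyLipschitz T)
    {x : α → E} {s : Set α} {K : ℝ≥0} (hs : IsCompact s) (hx : LipschitzOnWith K x s) :
    ∃ L, LipschitzOnWith L (T ∘ x) s := by
  obtain ⟨L, hL⟩ := hT.locallyLipschitzOn.exists_lipschitzOnWith_of_compact
    (hs.image_of_continuousOn hx.continuousOn)
  exact ⟨L * K, hL.comp hx (mapsTo_image x s)⟩

namespace LipschitzOnWith

variable {E : Type*} [NormedAddCommGroup E] [NormedSpace ℝ E] [FiniteDimensional ℝ E]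
  {x : ℝ → E} {K : ℝ≥0} {a b : ℝ}

theorem ae_hasDerivAt_Icc (hx : LipschitzOnWith K x (Icc a b)) :
    ∀ᵐ t ∂volume.restrict (Icc a b), HasDerivAt x (deriv x t) t := by
  rw [← Measure.restrict_congr_set Ioo_ae_eq_Icc, ae_restrict_iff' measurableSet_Ioo]
  filter_upwards [(hx.mono Ioo_subset_Icc_self).ae_differentiableWithinAt_of_mem] with t ht ht_mem
  exact ((ht ht_mem).differentiableAt (isOpen_Ioo.mem_nhds ht_mem)).hasDerivAt

theorem eq_of_ae_deriv_eq_zero (hab : a ≤ b) (hx : LipschitzOnWith K x (Icc a b))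
    (hx' : deriv x =ᵐ[volume.restrict (Icc a b)] 0) :
    ∀ t ∈ Icc a b, x t = x a := by
  have hzero : ∀ᵐ t, t ∈ uIcc a b → HasDerivAt x 0 t := by
    rw [uIcc_of_le hab, ← ae_restrict_iff' measurableSet_Icc]
    filter_upwards [hx.ae_hasDerivAt_Icc, hx'] with t ht ht'
    rwa [ht'] at ht
  rw [← uIcc_of_le hab] at hx ⊢
  obtain ⟨c, hc⟩ := hx.absolutelyContinuousOnInterval.const_of_ae_hasDerivAt_zero hzero
  intro t ht
  rw [hc t ht, hc a left_mem_uIcc]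

theorem ae_fderiv_apply_deriv_eq_zero {T : E → ℝ} (hab : a ≤ b)
    (hx : LipschitzOnWith K x (Icc a b)) (hT : ContDiff ℝ 1 T) (hTx : T (x a) = T (x b))
    (hT' : ∀ᵐ t ∂volume.restrict (Icc a b), 0 ≤ fderiv ℝ T (x t) (deriv x t)) :
    ∀ᵐ t ∂volume.restrict (Icc a b), fderiv ℝ T (x t) (deriv x t) = 0 := by
  have hchain : ∀ᵐ t ∂volume.restrict (Icc a b),
      deriv (T ∘ x) t = fderiv ℝ T (x t) (deriv x t) := by
    filter_upwards [hx.ae_hasDerivAt_Icc] with t ht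
    exact ((hT.differentiable one_ne_zero (x t)).hasFDerivAt.comp_hasDerivAt t ht).deriv
  obtain ⟨L, hL⟩ := hT.locallyLipschitz.exists_lipschitzOnWith_comp isCompact_Icc hx
  rw [← uIcc_of_le hab] at hL
  have hzero := hL.absolutelyContinuousOnInterval.ae_deriv_eq_zero_of_nonneg hab hTx
    (by filter_upwards [hchain, hT'] with t h h' using h ▸ h')
  filter_upwards [hchain, hzero] with t h h'
  rw [← h, h', Pi.zero_apply]

end LipschitzOnWith

theorem admissible_loops_are_constant_general
    (n : ℕ) (A : EuclideanSpace ℝ (Fin n))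
    (C : EuclideanSpace ℝ (Fin n) → Set (EuclideanSpace ℝ (Fin n)))
    (T : EuclideanSpace ℝ (Fin n) → ℝ) (hT : ContDiff ℝ 1 T)
    (hτ : ∀ x ξ, ξ ∈ C x → ‖ξ‖ / (1 + ‖x - A‖) ≤ fderiv ℝ T x ξ)
    (x : ℝ → EuclideanSpace ℝ (Fin n))
    (hlip : ∃ K, LipschitzOnWith K x (Icc 0 1))
    (hadm : ∀ᵐ t ∂(volume.restrict (Icc (0:ℝ) 1)), deriv x t ∈ C (x t))
    (hloop : x 0 = x 1) :
    ∀ t ∈ Icc (0:ℝ) 1, x t = x 0 := by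
  obtain ⟨K, hK⟩ := hlip
  have hbound : ∀ᵐ t ∂volume.restrict (Icc (0:ℝ) 1),
      ‖deriv x t‖ / (1 + ‖x t - A‖) ≤ fderiv ℝ T (x t) (deriv x t) :=
    hadm.mono fun t ht => hτ _ _ ht
  have hdT_zero := hK.ae_fderiv_apply_deriv_eq_zero zero_le_one hT (congrArg T hloop)
    (hbound.mono fun t ht => (div_nonneg (norm_nonneg _) (by positivity)).trans ht)
  refine hK.eq_of_ae_deriv_eq_zero zero_le_one ?_
  filter_upwards [hbound, hdT_zero] with t h h'
  rwa [h', div_le_iff₀ (by positivity), zero_mul, norm_le_zero_iff] at h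

/-- If `T` is `C¹` with `dT_x ξ ≥ ‖ξ‖ / (1 + ‖x - A‖)` on the convex cones
`C x`, then every admissible Lipschitz loop is constant. -/
theorem admissible_loops_are_constant
    (n : ℕ) (hn : 1 ≤ n) (A : EuclideanSpace ℝ (Fin n))
    (C : EuclideanSpace ℝ (Fin n) → Set (EuclideanSpace ℝ (Fin n)))
    (hC_convex : ∀ x, Convex ℝ (C x))
    (hC_zero : ∀ x, (0 : EuclideanSpace ℝ (Fin n)) ∈ C x)
    (hC_cone : ∀ x (l : ℝ) ξ, 0 ≤ l → ξ ∈ C x → l • ξ ∈ C x)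
    (T : EuclideanSpace ℝ (Fin n) → ℝ) (hT : ContDiff ℝ 1 T)
    (hτ : ∀ x ξ, ξ ∈ C x → ‖ξ‖ / (1 + ‖x - A‖) ≤ fderiv ℝ T x ξ)
    (x : ℝ → EuclideanSpace ℝ (Fin n))
    (hlip : ∃ K, LipschitzOnWith K x (Icc 0 1))
    (hadm : ∀ᵐ t ∂(volume.restrict (Icc (0:ℝ) 1)), deriv x t ∈ C (x t))
    (hloop : x 0 = x 1) :
    ∀ t ∈ Icc (0:ℝ) 1, x t = x 0 :=
  admissible_loops_are_constant_general n A C T hT hτ x hlip hadm hloop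
end
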